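/- arXiv:0909.2261 — 4 statements merged into one kernel-verified Lean document; each statement's English description precedes it below -/
import Mathlib

section
/- Let V be a real vector space of dimension n ≥ 3 and W a real inner product space (positive definite). Let β : V × V → W be a symmetric bilinear form that is flat, i.e., ⟨β(X,Y), β(Z,T)⟩ = ⟨β(X,T), β(Z,Y)⟩ for all X, Y, Z, T ∈ V. If dim W ≤ 2, then the nullity subspace N(β) = {X ∈ V : β(X,Y) = 0 for all Y ∈ V} is nonzero. -/
open scoped RealInnerProductSpace

theorem flat_bilinear_small_image_has_nullity
    (V W : Type*) [AddCommGroup V] [Module ℝ V] [FiniteDimensional ℝ V]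
    [NormedAddCommGroup W] [InnerProductSpace ℝ W] [FiniteDimensional ℝ W]
    (hV : 3 ≤ Module.finrank ℝ V) (hW : Module.finrank ℝ W ≤ 2)
    (β : V →ₗ[ℝ] V →ₗ[ℝ] W)
    (hsymm : ∀ X Y : V, β X Y = β Y X)
    (hflat : ∀ X Y Z T : V, ⟪β X Y, β Z T⟫ = ⟪β X T, β Z Y⟫) :
    ∃ X : V, X ≠ 0 ∧ ∀ Y : V, β X Y = 0 := by
  classical
  open Module LinearMap Submodule in
  -- key orthogonality: if β X₀ Z = 0 then β Z Y ⊥ β X₀ T.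
  have key : ∀ X₀ Z Y T : V, β X₀ Z = 0 → ⟪β Z Y, β X₀ T⟫ = 0 := by
    intro X₀ Z Y T hz
    rw [hsymm Z Y]
    calc ⟪β Y Z, β X₀ T⟫ = ⟪β Y T, β X₀ Z⟫ := hflat Y Z X₀ T
      _ = 0 := by rw [hz, inner_zero_right]
  by_cases hsurj : ∃ X : V, LinearMap.range (β X) = ⊤
  · obtain ⟨X₀, hX₀⟩ := hsurj
    have h1 := (β X₀).finrank_range_add_finrank_ker
    have h2 : Module.finrank ℝ (LinearMap.range (β X₀)) ≤ Module.finrank ℝ W :=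
      Submodule.finrank_le _
    have hker : LinearMap.ker (β X₀) ≠ ⊥ := by
      intro h
      rw [h] at h1
      simp only [finrank_bot] at h1
      omega
    obtain ⟨Z, hZmem, hZne⟩ := (Submodule.ne_bot_iff _).mp hker
    refine ⟨Z, hZne, ?_⟩
    intro Y
    have hm : β Z Y ∈ LinearMap.range (β X₀) := by rw [hX₀]; trivial
    obtain ⟨T, hT⟩ := hm
    have h0 := key X₀ Z Y T (LinearMap.mem_ker.mp hZmem)
    rw [hT] at h0
    exact inner_self_eq_zero.mp h0
  · push_neg at hsurj
    -- choose X₀ of maximal rank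
    obtain ⟨X₀, hmax⟩ : ∃ X₀ : V, ∀ X : V,
        Module.finrank ℝ (LinearMap.range (β X)) ≤ Module.finrank ℝ (LinearMap.range (β X₀)) := by
      have hbdd : BddAbove (Set.range fun X : V => Module.finrank ℝ (LinearMap.range (β X))) :=
        ⟨Module.finrank ℝ W, by rintro _ ⟨X, rfl⟩; exact Submodule.finrank_le _⟩
      have hne : (Set.range fun X : V => Module.finrank ℝ (LinearMap.range (β X))).Nonempty :=
        ⟨_, ⟨0, rfl⟩⟩
      obtain ⟨X₀, hX₀⟩ := Nat.sSup_mem hne hbdd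
      refine ⟨X₀, fun X => ?_⟩
      have h := le_csSup hbdd ⟨X, rfl⟩
      rwa [← hX₀] at h
    set K := LinearMap.ker (β X₀) with hKdef
    have hrn : Module.finrank ℝ (LinearMap.range (β X₀)) + Module.finrank ℝ K
        = Module.finrank ℝ V := (β X₀).finrank_range_add_finrank_ker
    -- step 3 : for Z ∈ K, β Z vanishes on K
    have step3 : ∀ Z ∈ K, K ≤ LinearMap.ker (β Z) := by
      intro Z hZ
      have hZ0 : β X₀ Z = 0 := LinearMap.mem_ker.mp hZ
      have hkerle : LinearMap.ker (β (X₀ + Z)) ≤ K ⊓ LinearMap.ker (β Z) := by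
        intro Y hY
        have hsum : β X₀ Y + β Z Y = 0 := by
          have h := LinearMap.mem_ker.mp hY
          rwa [map_add, LinearMap.add_apply] at h
        have h0 : ⟪β Z Y, β X₀ Y⟫ = 0 := key X₀ Z Y Y hZ0
        have hXY : β X₀ Y = - β Z Y := by
          rw [eq_neg_iff_add_eq_zero]; exact hsum
        rw [hXY, inner_neg_right, neg_eq_zero, inner_self_eq_zero] at h0
        have hX0 : β X₀ Y = 0 := by rw [hXY, h0, neg_zero]
        exact ⟨LinearMap.mem_ker.mpr hX0, LinearMap.mem_ker.mpr h0⟩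
      have h1 := (β (X₀ + Z)).finrank_range_add_finrank_ker
      have h2 := hmax (X₀ + Z)
      have h3 := Submodule.finrank_mono hkerle
      have hle : Module.finrank ℝ K
          ≤ Module.finrank ℝ ↥(K ⊓ LinearMap.ker (β Z)) := by omega
      have heq : (K ⊓ LinearMap.ker (β Z)) = K :=
        Submodule.eq_of_le_of_finrank_le inf_le_left hle
      intro x hx
      exact (heq.ge hx).2
    by_cases hKtop : K = ⊤
    · -- β is identically zero
      have hfK : Module.finrank ℝ K = Module.finrank ℝ V := by
        rw [hKdef] at hKtop ⊢
        rw [hKtop, finrank_top]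
      have hall : ∀ X : V, β X = 0 := by
        intro X
        have h2 := hmax X
        have h0 : Module.finrank ℝ (LinearMap.range (β X)) = 0 := by omega
        exact LinearMap.range_eq_bot.mp (Submodule.finrank_eq_zero.mp h0)
      have : Nontrivial V := Module.nontrivial_of_finrank_pos (R := ℝ) (by omega)
      obtain ⟨X, hX⟩ := exists_ne (0 : V)
      exact ⟨X, hX, fun Y => by rw [hall X]; rfl⟩
    · obtain ⟨Y₀, hY₀⟩ : ∃ y : V, y ∉ K := by
        by_contra h
        push_neg at h
        exact hKtop (Submodule.eq_top_iff'.mpr h)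
      -- rank is exactly 1, dim W = 2
      have hrlt : Module.finrank ℝ (LinearMap.range (β X₀)) < Module.finrank ℝ W := by
        rcases eq_or_lt_of_le (Submodule.finrank_le (LinearMap.range (β X₀))) with h | h
        · exact absurd (Submodule.eq_top_of_finrank_eq h) (hsurj X₀)
        · exact h
      have hr1 : 1 ≤ Module.finrank ℝ (LinearMap.range (β X₀)) := by
        by_contra h
        push_neg at h
        have : LinearMap.range (β X₀) = ⊥ :=
          Submodule.finrank_eq_zero.mp (by omega)
        exact hKtop (LinearMap.ker_eq_top.mpr (LinearMap.range_eq_bot.mp this))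
      -- the restricted map K → W, Z ↦ β Z Y₀, has nontrivial kernel
      set f : K →ₗ[ℝ] W := (β.flip Y₀).domRestrict K with hfdef
      have hrangef : LinearMap.range f ≤ (LinearMap.range (β X₀))ᗮ := by
        rintro _ ⟨⟨Z, hZ⟩, rfl⟩
        rw [Submodule.mem_orthogonal]
        rintro u ⟨T, rfl⟩
        rw [real_inner_comm]
        exact key X₀ Z Y₀ T (LinearMap.mem_ker.mp hZ)
      have horthrank := (LinearMap.range (β X₀)).finrank_add_finrank_orthogonal
      have h2 := f.finrank_range_add_finrank_ker
      have h3 := Submodule.finrank_mono hrangef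
      have h4 : 1 ≤ Module.finrank ℝ (LinearMap.ker f) := by omega
      have hkf : LinearMap.ker f ≠ ⊥ := by
        intro h
        rw [h] at h4
        simp only [finrank_bot] at h4
        omega
      obtain ⟨Z₀, hZ₀ker, hZ₀ne⟩ := (Submodule.ne_bot_iff _).mp hkf
      have hZ₀Y₀ : β (Z₀ : V) Y₀ = 0 := hZ₀ker
      have hZ₀K : K ≤ LinearMap.ker (β (Z₀ : V)) := step3 _ Z₀.2
      refine ⟨(Z₀ : V), by simpa using hZ₀ne, ?_⟩
      -- K ⊔ span Y₀ = ⊤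
      have hYin : Y₀ ∈ K ⊔ Submodule.span ℝ {Y₀} :=
        Submodule.mem_sup_right (Submodule.mem_span_singleton_self Y₀)
      have hlt : K < K ⊔ Submodule.span ℝ {Y₀} :=
        lt_of_le_of_ne le_sup_left (by intro h; rw [← h] at hYin; exact hY₀ hYin)
      have hfr : Module.finrank ℝ K < Module.finrank ℝ ↥(K ⊔ Submodule.span ℝ {Y₀}) :=
        Submodule.finrank_lt_finrank_of_lt hlt
      have hfr2 : Module.finrank ℝ ↥(K ⊔ Submodule.span ℝ {Y₀}) ≤ Module.finrank ℝ V :=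
        Submodule.finrank_le _
      have htop : K ⊔ Submodule.span ℝ {Y₀} = ⊤ :=
        Submodule.eq_top_of_finrank_eq (by omega)
      intro Y
      have hYmem : Y ∈ K ⊔ Submodule.span ℝ {Y₀} := htop ▸ Submodule.mem_top
      obtain ⟨k, hk, y, hy, rfl⟩ := Submodule.mem_sup.mp hYmem
      obtain ⟨a, rfl⟩ := Submodule.mem_span_singleton.mp hy
      have hzk : β (Z₀ : V) k = 0 := hZ₀K hk
      rw [map_add, map_smul, hzk, hZ₀Y₀, smul_zero, add_zero]
end

section
/- Let β : V × V → W be a flat symmetric bilinear form with respect to a positive definite inner product on W. Then dim N(β) ≥ dim V - dim S(β), where N(β) is the nullity subspace and S(β) the span of the image of β. -/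
open scoped RealInnerProductSpace

theorem flat_bilinear_nullity_bound
    (V W : Type*) [AddCommGroup V] [Module ℝ V] [FiniteDimensional ℝ V]
    [NormedAddCommGroup W] [InnerProductSpace ℝ W] [FiniteDimensional ℝ W]
    (β : V →ₗ[ℝ] V →ₗ[ℝ] W)
    (hsymm : ∀ X Y : V, β X Y = β Y X)
    (hflat : ∀ X Y Z T : V, ⟪β X Y, β Z T⟫ = ⟪β X T, β Z Y⟫) :
    Module.finrank ℝ V
      - Module.finrank ℝ (Submodule.span ℝ {w : W | ∃ X Y : V, β X Y = w})
      ≤ Module.finrank ℝ (LinearMap.ker β) := by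
  classical
  set r : V → ℕ := fun X => Module.finrank ℝ (LinearMap.range (β X)) with hr
  have hbdd : BddAbove (Set.range r) := by
    refine ⟨Module.finrank ℝ W, ?_⟩
    rintro n ⟨X, rfl⟩
    exact Submodule.finrank_le _
  have hne : (Set.range r).Nonempty := ⟨r 0, ⟨0, rfl⟩⟩
  obtain ⟨X₀, hX₀⟩ := Nat.sSup_mem hne hbdd
  have hmax : ∀ X, r X ≤ r X₀ := fun X => hX₀ ▸ le_csSup hbdd ⟨X, rfl⟩
  set K := LinearMap.ker (β X₀) with hK
  -- Claim A: for Y ∈ K, β(Z,Y) ⊥ β(X₀,T) for all Z,T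
  have hA : ∀ Y ∈ K, ∀ Z T : V, ⟪β X₀ T, β Z Y⟫ = 0 := by
    intro Y hY Z T
    rw [← hflat X₀ Y Z T, LinearMap.mem_ker.mp hY]
    simp
  -- kernel of β(X₀+Y) splits
  have hsum : ∀ Y ∈ K, ∀ Z : V, β (X₀ + Y) Z = 0 → β X₀ Z = 0 ∧ β Y Z = 0 := by
    intro Y hY Z hZ
    have hadd : β X₀ Z + β Y Z = 0 := by
      simpa [map_add] using hZ
    have hortho : ⟪β X₀ Z, β Y Z⟫ = 0 := by
      rw [hsymm Y Z]; exact hA Y hY Z Z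
    have hX0Z : β X₀ Z = 0 := by
      have : ⟪β X₀ Z, β X₀ Z⟫ = 0 := by
        have h1 : β X₀ Z = -(β Y Z) := eq_neg_of_add_eq_zero_left hadd
        calc ⟪β X₀ Z, β X₀ Z⟫ = ⟪β X₀ Z, -(β Y Z)⟫ := by rw [← h1]
          _ = -⟪β X₀ Z, β Y Z⟫ := by rw [inner_neg_right]
          _ = 0 := by rw [hortho]; simp
      exact inner_self_eq_zero.mp this
    refine ⟨hX0Z, ?_⟩
    have := hadd
    rw [hX0Z, zero_add] at this
    exact this
  -- For Y ∈ K, K ≤ ker (β Y)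
  have hKle : ∀ Y ∈ K, K ≤ LinearMap.ker (β Y) := by
    intro Y hY
    have hle : LinearMap.ker (β (X₀ + Y)) ≤ K := by
      intro Z hZ
      exact LinearMap.mem_ker.mpr (hsum Y hY Z (LinearMap.mem_ker.mp hZ)).1
    have hrn1 := LinearMap.finrank_range_add_finrank_ker (β (X₀ + Y))
    have hrn0 := LinearMap.finrank_range_add_finrank_ker (β X₀)
    have hrle : r (X₀ + Y) ≤ r X₀ := hmax _
    have hfin : Module.finrank ℝ K ≤ Module.finrank ℝ (LinearMap.ker (β (X₀ + Y))) := by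
      simp only [hr] at hrle
      have hKd : Module.finrank ℝ K = Module.finrank ℝ (LinearMap.ker (β X₀)) := rfl
      omega
    have heq : LinearMap.ker (β (X₀ + Y)) = K :=
      Submodule.eq_of_le_of_finrank_le hle hfin
    intro Z hZ
    have hZ' : Z ∈ LinearMap.ker (β (X₀ + Y)) := heq ▸ hZ
    exact LinearMap.mem_ker.mpr (hsum Y hY Z (LinearMap.mem_ker.mp hZ')).2
  -- β vanishes on K × K
  have hKK : ∀ Y ∈ K, ∀ Z ∈ K, β Y Z = 0 := by
    intro Y hY Z hZ
    exact LinearMap.mem_ker.mp (hKle Y hY hZ)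
  -- K is contained in the nullity
  have hKN : ∀ Z ∈ K, ∀ Y : V, β Y Z = 0 := by
    intro Z hZ Y
    have h2 : ⟪β Y Z, β Y Z⟫ = 0 := by
      have h3 := hflat Y Z Z Y
      rw [hsymm Z Y] at h3
      rw [h3, hKK Z hZ Z hZ]
      simp
    exact inner_self_eq_zero.mp h2
  have hKker : K ≤ LinearMap.ker β := by
    intro Z hZ
    rw [LinearMap.mem_ker]
    ext Y
    rw [LinearMap.zero_apply, hsymm Z Y]
    exact hKN Z hZ Y
  -- Final dimension count
  have hUS : LinearMap.range (β X₀) ≤ Submodule.span ℝ {w : W | ∃ X Y : V, β X Y = w} := by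
    rintro w ⟨Y, rfl⟩
    exact Submodule.subset_span ⟨X₀, Y, rfl⟩
  have h1 : r X₀ ≤ Module.finrank ℝ (Submodule.span ℝ {w : W | ∃ X Y : V, β X Y = w}) :=
    Submodule.finrank_mono hUS
  have h2 := LinearMap.finrank_range_add_finrank_ker (β X₀)
  have h3 : Module.finrank ℝ K ≤ Module.finrank ℝ (LinearMap.ker β) :=
    Submodule.finrank_mono hKker
  simp only [hr] at h1 h2
  have hKd : Module.finrank ℝ K = Module.finrank ℝ (LinearMap.ker (β X₀)) := rfl
  omega
end

section
/- Let c > 1 and define k(s) = arccos((1/√c)·sin(√c·s)) and h(s) = -√((c-1)/c)·ln((cos(√c·s) + √(c - sin²(√c·s)))/(1 + √c)) for s in the open interval (0, π/√c) excluding points where sin(√c·s) = ±√c. Then k'(s)² + h'(s)² = 1 wherever both derivatives are defined. -/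
/-!
With `θ = √c s` and `q = √(c - sin² θ)`, the chain rule gives `k' = -√c cos θ / q` and
`h' = √(c - 1) sin θ / q`; the latter because `u = cos θ + q` satisfies `u' = -sin θ · u / q`,
so the logarithm differentiates to `-sin θ / q`. Hence
`k'² + h'² = (c cos² θ + (c - 1) sin² θ) / (c - sin² θ) = 1`.
-/

open Real Set

section ProfileCurve

variable {c : ℝ}

lemma sin_sq_lt_of_one_lt (hc : 1 < c) (θ : ℝ) : sin θ ^ 2 < c :=
  (sin_sq_le_one θ).trans_lt hc

lemma sqrt_sub_sin_sq_pos (hc : 1 < c) (θ : ℝ) : 0 < √(c - sin θ ^ 2) :=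
  sqrt_pos.mpr (sub_pos.mpr (sin_sq_lt_of_one_lt hc θ))

lemma abs_cos_lt_sqrt_sub_sin_sq (hc : 1 < c) (θ : ℝ) : |cos θ| < √(c - sin θ ^ 2) := by
  rw [← sqrt_sq_eq_abs, cos_sq']
  exact sqrt_lt_sqrt (sub_nonneg.mpr (sin_sq_le_one θ)) (by linarith)

lemma cos_add_sqrt_sub_sin_sq_pos (hc : 1 < c) (θ : ℝ) : 0 < cos θ + √(c - sin θ ^ 2) := by
  linarith [neg_abs_le (cos θ), abs_cos_lt_sqrt_sub_sin_sq hc θ]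

lemma hasDerivAt_arccos_one_div_sqrt_mul_sin (hc : 1 < c) (θ : ℝ) :
    HasDerivAt (fun θ => arccos (1 / √c * sin θ)) (-(cos θ / √(c - sin θ ^ 2))) θ := by
  have hc0 : 0 < c := by linarith
  have hsc : 0 < √c := sqrt_pos.mpr hc0
  have hsq : sin θ ^ 2 < √c ^ 2 := by
    rw [sq_sqrt hc0.le]; exact sin_sq_lt_of_one_lt hc θ
  have habs : |1 / √c * sin θ| < 1 := by
    rw [abs_mul, abs_of_pos (one_div_pos.mpr hsc), one_div_mul_eq_div,
      div_lt_one hsc, ← abs_of_pos hsc]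
    exact sq_lt_sq.mp hsq
  have hroot : √(1 - (1 / √c * sin θ) ^ 2) = √(c - sin θ ^ 2) / √c := by
    rw [← sqrt_div' _ hc0.le]
    congr 1
    field_simp
    rw [sq_sqrt hc0.le]
    ring
  refine ((hasDerivAt_arccos (abs_lt.mp habs).1.ne' (abs_lt.mp habs).2.ne).comp θ
    ((hasDerivAt_sin θ).const_mul (1 / √c))).congr_deriv ?_
  rw [hroot]
  field_simp

lemma hasDerivAt_log_cos_add_sqrt_sub_sin_sq_div (hc : 1 < c) {d : ℝ} (hd : d ≠ 0) (θ : ℝ) :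
    HasDerivAt (fun θ => log ((cos θ + √(c - sin θ ^ 2)) / d))
      (-(sin θ / √(c - sin θ ^ 2))) θ := by
  have hq := sqrt_sub_sin_sq_pos hc θ
  have hu := cos_add_sqrt_sub_sin_sq_pos hc θ
  have hroot : HasDerivAt (fun θ => √(c - sin θ ^ 2))
      (-(2 * sin θ * cos θ) / (2 * √(c - sin θ ^ 2))) θ := by
    simpa using (((hasDerivAt_sin θ).pow 2).const_sub c).sqrt
      (sub_pos.mpr (sin_sq_lt_of_one_lt hc θ)).ne'
  have hquot : HasDerivAt (fun θ => (cos θ + √(c - sin θ ^ 2)) / d)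
      ((-sin θ + -(2 * sin θ * cos θ) / (2 * √(c - sin θ ^ 2))) / d) θ :=
    ((hasDerivAt_cos θ).add hroot).div_const d
  refine (hquot.log (div_ne_zero hu.ne' hd)).congr_deriv ?_
  field_simp
  ring

lemma profile_speed_sq (hc : 1 < c) (θ : ℝ) :
    (-(cos θ / √(c - sin θ ^ 2)) * √c) ^ 2
      + (-√((c - 1) / c) * (-(sin θ / √(c - sin θ ^ 2)) * √c)) ^ 2 = 1 := by
  have hc0 : 0 < c := by linarith
  simp only [mul_pow, neg_sq, div_pow]
  rw [sq_sqrt hc0.le, sq_sqrt (div_nonneg (by linarith) hc0.le),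
    sq_sqrt (sub_pos.mpr (sin_sq_lt_of_one_lt hc θ)).le]
  have hden : c - sin θ ^ 2 ≠ 0 := (sub_pos.mpr (sin_sq_lt_of_one_lt hc θ)).ne'
  field_simp
  linear_combination c * cos_sq_add_sin_sq θ

end ProfileCurve

theorem profile_curve_arclength_sphere (c : ℝ) (hc : 1 < c)
    (k h : ℝ → ℝ)
    (hk : ∀ s, k s = Real.arccos ((1 / Real.sqrt c) * Real.sin (Real.sqrt c * s)))
    (hh : ∀ s, h s = -Real.sqrt ((c - 1) / c) *
      Real.log ((Real.cos (Real.sqrt c * s) +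
        Real.sqrt (c - Real.sin (Real.sqrt c * s) ^ 2)) / (1 + Real.sqrt c))) :
    ∀ s ∈ Ioo 0 (Real.pi / Real.sqrt c),
      Real.sin (Real.sqrt c * s) ≠ Real.sqrt c →
      Real.sin (Real.sqrt c * s) ≠ -Real.sqrt c →
      (deriv k s) ^ 2 + (deriv h s) ^ 2 = 1 := by
  intro s _ _ _
  have hθ : HasDerivAt (fun s => √c * s) √c s := hasDerivAt_const_mul √c
  have hk' : HasDerivAt k (-(cos (√c * s) / √(c - sin (√c * s) ^ 2)) * √c) s := by
    rw [funext hk]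
    exact (hasDerivAt_arccos_one_div_sqrt_mul_sin hc (√c * s)).comp s hθ
  have hh' : HasDerivAt h
      (-√((c - 1) / c) * (-(sin (√c * s) / √(c - sin (√c * s) ^ 2)) * √c)) s := by
    rw [funext hh]
    exact ((hasDerivAt_log_cos_add_sqrt_sub_sin_sq_div hc
      (by positivity : 1 + √c ≠ 0) (√c * s)).comp s hθ).const_mul (-√((c - 1) / c))
  rw [hk'.deriv, hh'.deriv]
  exact profile_speed_sq hc (√c * s)
end

section
/- Let c > 0 and define k(s) = arcsinh((1/√c)·sin(√c·s)) and h(s) = -√((c+1)/c)·arctan(cos(√c·s)/√(c + sin²(√c·s))) for s ∈ (0, π/√c). Then k'(s)² + h'(s)² = 1 on this interval. -/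
/-! In the variable `u = √c s` both profile functions have derivatives over the common
denominator `√(c + sin² u)`: `k` gives `√c cos u` and `h` gives `√(c + 1) sin u`. The squared
numerators add up to `c cos² u + (c + 1) sin² u = c + sin² u`. -/

open Real Set

lemma hasDerivAt_arsinh_one_div_sqrt_mul_sin {c : ℝ} (hc : 0 < c) (u : ℝ) :
    HasDerivAt (fun u => arsinh (1 / √c * sin u)) (cos u / √(c + sin u ^ 2)) u := by
  have hrad : 1 + (1 / √c * sin u) ^ 2 = (c + sin u ^ 2) / c := by
    field_simp
    rw [sq_sqrt hc.le, mul_comm]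
  refine ((hasDerivAt_arsinh _).comp u ((hasDerivAt_sin u).const_mul (1 / √c))).congr_deriv ?_
  rw [hrad, sqrt_div' _ hc.le]
  field_simp

lemma hasDerivAt_arctan_cos_div_sqrt {c u : ℝ} (hu : 0 < c + sin u ^ 2) :
    HasDerivAt (fun u => arctan (cos u / √(c + sin u ^ 2))) (-sin u / √(c + sin u ^ 2)) u := by
  set V := √(c + sin u ^ 2)
  have hV : 0 < V := sqrt_pos.mpr hu
  have hV2 : V ^ 2 = c + sin u ^ 2 := sq_sqrt hu.le
  have hc1 : 0 < c + 1 := by nlinarith [sin_sq_le_one u]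
  have hq : HasDerivAt (fun u => √(c + sin u ^ 2)) (sin u * cos u / V) u := by
    refine ((((hasDerivAt_sin u).pow 2).const_add c).sqrt hu.ne').congr_deriv ?_
    simp only [Pi.pow_apply]
    field_simp
    ring
  have hquot : HasDerivAt (fun u => cos u / √(c + sin u ^ 2)) (-(c + 1) * sin u / V ^ 3) u := by
    refine ((hasDerivAt_cos u).div hq hV.ne').congr_deriv ?_
    field_simp
    linear_combination -sin u * V ^ 2 * (hV2 + sin_sq_add_cos_sq u)
  have h1 : 1 + (cos u / V) ^ 2 = (c + 1) / V ^ 2 := by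
    field_simp
    linear_combination hV2 + sin_sq_add_cos_sq u
  refine ((hasDerivAt_arctan _).comp u hquot).congr_deriv ?_
  rw [h1]
  field_simp

theorem spherical_profile_arclength_hyperbolic (c : ℝ) (hc : 0 < c)
    (k h : ℝ → ℝ)
    (hk : ∀ s, k s = Real.arsinh ((1 / Real.sqrt c) * Real.sin (Real.sqrt c * s)))
    (hh : ∀ s, h s = -Real.sqrt ((c + 1) / c) *
      Real.arctan (Real.cos (Real.sqrt c * s) /
        Real.sqrt (c + Real.sin (Real.sqrt c * s) ^ 2))) :
    ∀ s ∈ Ioo 0 (Real.pi / Real.sqrt c),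
      (deriv k s) ^ 2 + (deriv h s) ^ 2 = 1 := by
  intro s _
  set u := √c * s
  have hu : 0 < c + sin u ^ 2 := by positivity
  have hk' : HasDerivAt k (cos u / √(c + sin u ^ 2) * √c) s := by
    rw [funext hk]
    exact (hasDerivAt_arsinh_one_div_sqrt_mul_sin hc u).comp s (hasDerivAt_const_mul _)
  have hh' : HasDerivAt h (-√((c + 1) / c) * (-sin u / √(c + sin u ^ 2) * √c)) s := by
    rw [funext hh]
    exact ((hasDerivAt_arctan_cos_div_sqrt hu).comp s (hasDerivAt_const_mul _)).const_mul _
  rw [hk'.deriv, hh'.deriv, sqrt_div' _ hc.le]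
  field_simp
  rw [sq_sqrt hc.le, sq_sqrt hu.le, sq_sqrt (by positivity)]
  linear_combination c * sin_sq_add_cos_sq u
end
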